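/- A half-synchronized subshift whose Fischer graph is finite is sofic. -/

import Mathlib

namespace Paper

variable {A B C : Type*}

def shiftMap (x : ℤ → A) : ℤ → A := fun i => x (i + 1)

def shiftInvMap (x : ℤ → A) : ℤ → A := fun i => x (i - 1)

/-- A subshift: nonempty, shift-invariant (both directions), and closed
(expressed combinatorially: any configuration all of whose central patterns
are approximated by members is a member). -/
def IsSubshift (X : Set (ℤ → A)) : Prop :=
  X.Nonempty ∧ (∀ x ∈ X, shiftMap x ∈ X) ∧ (∀ x ∈ X, shiftInvMap x ∈ X) ∧
  ∀ x : ℤ → A, (∀ n : ℕ, ∃ y ∈ X, ∀ i : ℤ, |i| ≤ (n : ℤ) → y i = x i) → x ∈ X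

/-- The word `x[i, i+k-1]`. -/
def cfgWord (x : ℤ → A) (i : ℤ) (k : ℕ) : List A :=
  List.ofFn (fun t : Fin k => x (i + ((t : ℕ) : ℤ)))

/-- The language of a set of configurations. -/
def lang (X : Set (ℤ → A)) : Set (List A) := {w | ∃ x ∈ X, ∃ i : ℤ, cfgWord x i w.length = w}

def TransitiveShift (X : Set (ℤ → A)) : Prop :=
  ∀ u ∈ lang X, ∀ v ∈ lang X, ∃ w : List A, u ++ w ++ v ∈ lang X

/-- Left ray of a configuration: `leftRay x n = x (-1-n)`. -/
def leftRay (x : ℤ → A) : ℕ → A := fun n => x (-1 - (n : ℤ))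

def rightRay (x : ℤ → A) : ℕ → A := fun n => x (n : ℤ)

def LeftRays (X : Set (ℤ → A)) : Set (ℕ → A) := leftRay '' X

def RightRays (X : Set (ℤ → A)) : Set (ℕ → A) := rightRay '' X

/-- Glue a left ray and a right ray into a configuration. -/
def glue (l r : ℕ → A) : ℤ → A := fun i => if 0 ≤ i then r i.toNat else l (-1 - i).toNat

/-- Follower set of a left-infinite sequence. -/
def foll (X : Set (ℤ → A)) (l : ℕ → A) : Set (ℕ → A) := {r | glue l r ∈ X}

def wordThen (w : List A) (r : ℕ → A) : ℕ → A :=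
  fun n => if h : n < w.length then w.get ⟨n, h⟩ else r (n - w.length)

/-- Follower set of a word. -/
def follW (X : Set (ℤ → A)) (w : List A) : Set (ℕ → A) := {r | wordThen w r ∈ RightRays X}

def occursInLeft (l : ℕ → A) (w : List A) : Prop :=
  ∃ j : ℕ, ∀ k : Fin w.length, l (j + (w.length - 1 - (k : ℕ))) = w.get k

/-- The language of a left-infinite sequence. -/
def langL (l : ℕ → A) : Set (List A) := {w | occursInLeft l w}

/-- The left ray `l` ends with the word `w`. -/
def raySuffix (l : ℕ → A) (w : List A) : Prop :=
  ∀ k : Fin w.length, l (w.length - 1 - (k : ℕ)) = w.get k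

def HalfSyncWord (X : Set (ℤ → A)) (w : List A) : Prop :=
  w ∈ lang X ∧ ∃ l ∈ LeftRays X, raySuffix l w ∧ langL l = lang X ∧ foll X l = follW X w

def HalfSynchronized (X : Set (ℤ → A)) : Prop := TransitiveShift X ∧ ∃ w, HalfSyncWord X w

def SyncWord (X : Set (ℤ → A)) (w : List A) : Prop :=
  w ∈ lang X ∧ ∀ l ∈ LeftRays X, raySuffix l w → foll X l = follW X w

def Synchronized (X : Set (ℤ → A)) : Prop := TransitiveShift X ∧ ∃ w, SyncWord X w

/-- Product of two subshifts, over the product alphabet. -/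
def prodShift (Y : Set (ℤ → B)) (Z : Set (ℤ → C)) : Set (ℤ → B × C) :=
  {x | (fun i => (x i).1) ∈ Y ∧ (fun i => (x i).2) ∈ Z}

/-- Identification of a pair of sets of right rays with a set of right rays
over the product alphabet. -/
def prodRaySet (S : Set (ℕ → B)) (T : Set (ℕ → C)) : Set (ℕ → B × C) :=
  {r | (fun n => (r n).1) ∈ S ∧ (fun n => (r n).2) ∈ T}

/-- Extend a left ray by one more symbol on the right. -/
def extendRay (l : ℕ → A) (a : A) : ℕ → A := fun n => if n = 0 then a else l (n - 1)

/-- Edge of the Krieger graph from `u` to `v` labeled `a`. -/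
def KEdge (X : Set (ℤ → A)) (u : Set (ℕ → A)) (a : A) (v : Set (ℕ → A)) : Prop :=
  ∃ l ∈ LeftRays X, extendRay l a ∈ LeftRays X ∧ u = foll X l ∧ v = foll X (extendRay l a)

def KStep (X : Set (ℤ → A)) (u v : Set (ℕ → A)) : Prop := ∃ a, KEdge X u a v

/-- Existence of a finite path in the Krieger graph. -/
def KReach (X : Set (ℤ → A)) : Set (ℕ → A) → Set (ℕ → A) → Prop :=
  Relation.ReflTransGen (KStep X)

def KVertex (X : Set (ℤ → A)) (v : Set (ℕ → A)) : Prop := ∃ l ∈ LeftRays X, v = foll X l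

/-- A subshift is sofic iff it has finitely many follower sets. -/
def Sofic (X : Set (ℤ → A)) : Prop := {v : Set (ℕ → A) | KVertex X v}.Finite

/-- Vertex of the Fischer graph (w.r.t. half-synchronizing word `w`): a vertex of the
Krieger graph in the maximal strongly connected subgraph containing `foll w`. -/
def FVertex (X : Set (ℤ → A)) (w : List A) (v : Set (ℕ → A)) : Prop :=
  KVertex X v ∧ KReach X (follW X w) v ∧ KReach X v (follW X w)

/-- Directed (multi)graph with vertex type `V` and edge type `E`. -/
structure DiGraph (V : Type*) (E : Type*) where
  ini : E → V
  ter : E → V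

variable {V E V' E' : Type*}

/-- Bi-infinite path on a graph. -/
def BiPath (G : DiGraph V E) (x : ℤ → E) : Prop := ∀ i : ℤ, G.ter (x i) = G.ini (x (i + 1))

/-- `p` is a finite path of `m+1` edges. -/
def FinPath (G : DiGraph V E) (m : ℕ) (p : Fin (m + 1) → E) : Prop :=
  ∀ k : Fin m, G.ter (p k.castSucc) = G.ini (p k.succ)

/-- The subpath `x[i, i+n]` of a bi-infinite path is a shortest path between its endpoints. -/
def GeodesicSeg (G : DiGraph V E) (x : ℤ → E) (i : ℤ) (n : ℕ) : Prop :=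
  ∀ (m : ℕ) (p : Fin (m + 1) → E), FinPath G m p →
    G.ini (p 0) = G.ini (x i) → G.ter (p (Fin.last m)) = G.ter (x (i + (n : ℤ))) → n ≤ m

def EvGeodesic (G : DiGraph V E) (x : ℤ → E) : Prop :=
  ∃ i₀ : ℤ, ∀ i : ℤ, i₀ ≤ i → ∀ n : ℕ, GeodesicSeg G x i n

/-- Strictly proximal pair of bi-infinite paths. -/
def StrictProxPair (x y : ℤ → E) : Prop :=
  (∀ n : ℕ, ∃ i : ℕ, ∀ k : ℕ, k ≤ n → x ((i : ℤ) + (k : ℤ)) = y ((i : ℤ) + (k : ℤ))) ∧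
  ∀ N : ℕ, ∃ i : ℕ, N ≤ i ∧ x ((i : ℕ) : ℤ) ≠ y ((i : ℕ) : ℤ)

def HasEvGeoProxPair (G : DiGraph V E) : Prop :=
  ∃ x y : ℤ → E, BiPath G x ∧ BiPath G y ∧ EvGeodesic G x ∧ EvGeodesic G y ∧ StrictProxPair x y

/-- Edges of the Fischer graph: Krieger edges between Fischer vertices. -/
def FischerE (X : Set (ℤ → A)) (w : List A) : Type _ :=
  {t : Set (ℕ → A) × A × Set (ℕ → A) //
    FVertex X w t.1 ∧ FVertex X w t.2.2 ∧ KEdge X t.1 t.2.1 t.2.2}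

def FischerGraph (X : Set (ℤ → A)) (w : List A) : DiGraph (Set (ℕ → A)) (FischerE X w) :=
  ⟨fun e => e.1.1, fun e => e.1.2.2⟩

def SlidingBlockCode (X : Set (ℤ → A)) (F : (ℤ → A) → (ℤ → B)) : Prop :=
  ∃ (r : ℕ) (f : (Fin (2 * r + 1) → A) → B),
    ∀ x ∈ X, ∀ i : ℤ, F x i = f (fun k => x (i + ((k : ℕ) : ℤ) - (r : ℤ)))

def ShiftConjugate (X : Set (ℤ → A)) (Y : Set (ℤ → B)) : Prop :=
  ∃ F : (ℤ → A) → (ℤ → B), SlidingBlockCode X F ∧ Set.InjOn F X ∧ F '' X = Y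

def DirectPrime (X : Set (ℤ → A)) : Prop :=
  ∀ (B C : Type) (_ : Finite B) (_ : Finite C) (Y : Set (ℤ → B)) (Z : Set (ℤ → C)),
    IsSubshift Y → IsSubshift Z → ShiftConjugate X (prodShift Y Z) →
    (∃ y, Y = {y}) ∨ (∃ z, Z = {z})

/-!
By density of the Fischer graph, a word `u` can be followed by exactly the words that label
Fischer paths starting at a vertex where some Fischer path labelled `u` ends. So the follower sets
of words form a finite family, indexed by sets of Fischer vertices. The follower set of a left ray
is determined by the follower sets of its suffixes; these decrease, hence stabilize in that finite
family.
-/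

lemma Antitone.exists_iInter_eq_of_finite_range {α : Type*} {g : ℕ → Set α} (hg : Antitone g)
    (hfin : (Set.range g).Finite) : ∃ M, ⋂ m, g m = g M := by
  obtain ⟨_, ⟨M, rfl⟩, hmin⟩ := hfin.exists_minimal (Set.range_nonempty g)
  refine ⟨M, (Set.iInter_subset g M).antisymm (Set.subset_iInter fun m => ?_)⟩
  exact (hmin ⟨max m M, rfl⟩ (hg (le_max_right m M))).trans (hg (le_max_left m M))

section

variable {X : Set (ℤ → A)} {x : ℤ → A} {l : ℕ → A} {u v s : List A}

lemma IsSubshift.shift_mem (hX : IsSubshift X) (k : ℤ) (hx : x ∈ X) :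
    (fun i => x (i + k)) ∈ X := by
  induction k using Int.induction_on with
  | zero => simpa using hx
  | succ k ih =>
    convert hX.2.1 _ ih using 1
    funext i; simp only [shiftMap]; ring_nf
  | pred k ih =>
    convert hX.2.2.1 _ ih using 1
    funext i; simp only [shiftInvMap]; ring_nf

lemma cfgWord_length (x : ℤ → A) (i : ℤ) (k : ℕ) : (cfgWord x i k).length = k := by
  simp [cfgWord]

lemma cfgWord_add (x : ℤ → A) (i : ℤ) (m n : ℕ) :
    cfgWord x i (m + n) = cfgWord x i m ++ cfgWord x (i + m) n := by
  simp only [cfgWord, List.ofFn_add, Fin.val_castLE, Fin.val_natAdd]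
  push_cast
  simp only [add_assoc]

lemma cfgWord_mem_lang (hx : x ∈ X) (i : ℤ) (k : ℕ) : cfgWord x i k ∈ lang X :=
  ⟨x, hx, i, by rw [cfgWord_length]⟩

lemma mem_lang_of_append_mem_right (h : u ++ v ∈ lang X) : v ∈ lang X := by
  obtain ⟨x, hx, i, hxi⟩ := h
  rw [List.length_append, cfgWord_add] at hxi
  obtain ⟨-, hv⟩ := List.append_inj hxi (cfgWord_length _ _ _)
  exact hv ▸ cfgWord_mem_lang hx _ _

lemma IsSubshift.mem_of_forall_cfgWord_mem (hX : IsSubshift X)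
    (h : ∀ n : ℕ, cfgWord x (-n) (2 * n + 1) ∈ lang X) : x ∈ X := by
  refine hX.2.2.2 x fun n => ?_
  obtain ⟨y, hy, j, hyj⟩ := h n
  rw [cfgWord_length] at hyj
  refine ⟨fun i => y (i + (j + n)), hX.shift_mem _ hy, fun i hi => ?_⟩
  rw [abs_le] at hi
  have hk : (i + n).toNat < 2 * n + 1 := by omega
  have := congrArg (·[(i + n).toNat]?) hyj
  simp only [cfgWord, List.getElem?_ofFn, hk, ↓reduceDIte, Option.some.injEq] at this
  convert this using 2 <;> omega

lemma leftRay_glue (l r : ℕ → A) : leftRay (glue l r) = l := by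
  funext n
  simp only [leftRay, glue, show ¬ (0 : ℤ) ≤ -1 - n by omega, ↓reduceIte]
  congr; omega

lemma glue_leftRay_rightRay (x : ℤ → A) : glue (leftRay x) (rightRay x) = x := by
  funext i
  by_cases h : 0 ≤ i
  · simp only [glue, rightRay, h, ↓reduceIte]; congr; omega
  · simp only [glue, leftRay, h, ↓reduceIte]; congr; omega

lemma mem_leftRays_iff : l ∈ LeftRays X ↔ (foll X l).Nonempty := by
  constructor
  · rintro ⟨x, hx, rfl⟩
    exact ⟨rightRay x, by rwa [foll, Set.mem_ofPred_eq, glue_leftRay_rightRay]⟩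
  · rintro ⟨r, hr⟩
    exact ⟨glue l r, hr, leftRay_glue l r⟩

lemma glue_extendRay (l r : ℕ → A) (a : A) :
    glue (extendRay l a) r = shiftMap (glue l (extendRay r a)) := by
  funext i
  simp only [glue, extendRay, shiftMap]
  by_cases h : 0 ≤ i
  · simp only [h, show 0 ≤ i + 1 by omega, show (i + 1).toNat ≠ 0 by omega, ↓reduceIte]
    congr; omega
  · by_cases h' : i = -1
    · simp [h']
    · simp only [h, show ¬ 0 ≤ i + 1 by omega, show (-1 - i).toNat ≠ 0 by omega, ↓reduceIte]
      congr 1; omega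

lemma foll_extendRay (hX : IsSubshift X) (l : ℕ → A) (a : A) :
    foll X (extendRay l a) = {r | extendRay r a ∈ foll X l} := by
  ext r
  simp only [foll, Set.mem_ofPred_eq, glue_extendRay]
  refine ⟨fun h => ?_, hX.2.1 _⟩
  convert hX.2.2.1 _ h
  funext i; simp [shiftInvMap, shiftMap]

lemma foll_extendRay_mono (hX : IsSubshift X) {l₁ l₂ : ℕ → A} (h : foll X l₁ ⊆ foll X l₂)
    (a : A) : foll X (extendRay l₁ a) ⊆ foll X (extendRay l₂ a) := by
  rw [foll_extendRay hX, foll_extendRay hX]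
  exact fun r hr => h hr

lemma KEdge.extendRay (hX : IsSubshift X) {q q' : Set (ℕ → A)} {a : A} (h : KEdge X q a q')
    (hl : foll X l = q) : Paper.extendRay l a ∈ LeftRays X ∧ foll X (Paper.extendRay l a) = q' := by
  obtain ⟨l', -, hl'a, rfl, rfl⟩ := h
  have heq : foll X (Paper.extendRay l a) = foll X (Paper.extendRay l' a) :=
    (foll_extendRay_mono hX hl.le a).antisymm (foll_extendRay_mono hX hl.ge a)
  exact ⟨mem_leftRays_iff.2 (heq ▸ mem_leftRays_iff.1 hl'a), heq⟩

/-- The left ray `l` with its last `j` symbols removed. -/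
def dropRay (l : ℕ → A) (j : ℕ) : ℕ → A := fun n => l (n + j)

def rayAppend (l : ℕ → A) (s : List A) : ℕ → A := s.foldl Paper.extendRay l

/-- The word formed by the last `m` symbols of the left ray `l`. -/
def suffixWord (l : ℕ → A) (m : ℕ) : List A := List.ofFn fun k : Fin m => l (m - 1 - k)

def prefixWord (r : ℕ → A) (n : ℕ) : List A := List.ofFn fun k : Fin n => r k

lemma rayAppend_cons (l : ℕ → A) (a : A) (s : List A) :
    rayAppend l (a :: s) = rayAppend (extendRay l a) s := rfl

lemma dropRay_mem_leftRays (hX : IsSubshift X) (hl : l ∈ LeftRays X) (j : ℕ) :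
    dropRay l j ∈ LeftRays X := by
  obtain ⟨x, hx, rfl⟩ := hl
  refine ⟨_, hX.shift_mem (-j) hx, ?_⟩
  funext n
  simp only [leftRay, dropRay]
  congr 1; push_cast; ring

lemma dropRay_dropRay (l : ℕ → A) (i j : ℕ) : dropRay (dropRay l i) j = dropRay l (j + i) := by
  funext n
  simp only [dropRay, add_assoc]

lemma dropRay_rayAppend_length (l : ℕ → A) (s : List A) :
    dropRay (rayAppend l s) s.length = l := by
  induction s generalizing l with
  | nil => rfl
  | cons a s ih =>
    funext n
    have := congrFun (ih (extendRay l a)) (n + 1)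
    simp only [dropRay, extendRay, Nat.add_one_ne_zero, ↓reduceIte, Nat.add_sub_cancel] at this
    rw [← this, dropRay, rayAppend_cons, List.length_cons]
    congr 1; omega

lemma mem_leftRays_of_rayAppend_mem (hX : IsSubshift X) (h : rayAppend l s ∈ LeftRays X) :
    l ∈ LeftRays X :=
  dropRay_rayAppend_length l s ▸ dropRay_mem_leftRays hX h _

lemma suffixWord_length (l : ℕ → A) (m : ℕ) : (suffixWord l m).length = m := by
  simp [suffixWord]

lemma suffixWord_succ (l : ℕ → A) (m : ℕ) : suffixWord l (m + 1) = l m :: suffixWord l m := by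
  simp only [suffixWord, List.ofFn_succ, Fin.val_zero, Fin.val_succ]
  congr 2
  funext k
  congr 1; omega

lemma suffixWord_add (l : ℕ → A) (m n : ℕ) :
    suffixWord l (m + n) = suffixWord (dropRay l n) m ++ suffixWord l n := by
  simp only [suffixWord, dropRay, List.ofFn_add, Fin.val_castLE, Fin.val_natAdd]
  congr 2 <;> funext k <;> congr 1 <;> omega

lemma suffixWord_eq_of_le {l l' : ℕ → A} {m n : ℕ} (h : suffixWord l m = suffixWord l' m)
    (hnm : n ≤ m) : suffixWord l n = suffixWord l' n := by
  obtain ⟨k, rfl⟩ := Nat.exists_eq_add_of_le' hnm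
  rw [suffixWord_add, suffixWord_add] at h
  exact List.append_inj_right' h (by simp only [suffixWord_length])

lemma raySuffix_iff {w : List A} : raySuffix l w ↔ suffixWord l w.length = w := by
  conv_rhs => rhs; rw [← List.ofFn_get w]
  rw [suffixWord, List.ofFn_inj, funext_iff]
  rfl

lemma occursInLeft_iff {w : List A} : occursInLeft l w ↔ ∃ j, raySuffix (dropRay l j) w := by
  simp only [occursInLeft, raySuffix, dropRay, add_comm]

lemma suffixWord_rayAppend (l : ℕ → A) (s : List A) : suffixWord (rayAppend l s) s.length = s := by
  induction s generalizing l with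
  | nil => rfl
  | cons a s ih =>
    rw [rayAppend_cons, List.length_cons, add_comm, suffixWord_add, dropRay_rayAppend_length, ih]
    rfl

lemma rayAppend_dropRay_suffixWord (l : ℕ → A) (j : ℕ) :
    rayAppend (dropRay l j) (suffixWord l j) = l := by
  induction j with
  | zero => rfl
  | succ j ih =>
    rw [suffixWord_succ, rayAppend_cons]
    convert ih using 2
    funext n
    cases n <;> simp [extendRay, dropRay, add_assoc, add_comm 1]

lemma suffixWord_mem_lang (hl : l ∈ LeftRays X) (m : ℕ) : suffixWord l m ∈ lang X := by
  obtain ⟨x, hx, rfl⟩ := hl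
  convert cfgWord_mem_lang hx (-m) m using 1
  simp only [suffixWord, cfgWord, leftRay]
  congr 1; funext k; congr 1; omega

lemma cfgWord_glue (l r : ℕ → A) (m n : ℕ) :
    cfgWord (glue l r) (-m) (m + n) = suffixWord l m ++ prefixWord r n := by
  rw [cfgWord_add]
  simp only [cfgWord, suffixWord, prefixWord, glue]
  congr 2 <;> funext k
  · rw [if_neg (by omega)]; congr; omega
  · rw [if_pos (by omega)]; congr; omega

lemma foll_subset_follW (hX : IsSubshift X) {w : List A} (hw : raySuffix l w) :
    foll X l ⊆ follW X w := by
  intro r hr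
  refine ⟨_, hX.shift_mem (-w.length) hr, ?_⟩
  funext n
  simp only [rightRay, wordThen, glue]
  by_cases h : n < w.length
  · rw [dif_pos h, if_neg (by omega), ← hw ⟨n, h⟩]
    congr 1; dsimp only; omega
  · rw [dif_neg h, if_pos (by omega)]
    congr; omega

lemma foll_rayAppend_mono (hX : IsSubshift X) {l₁ l₂ : ℕ → A} (h : foll X l₁ ⊆ foll X l₂)
    (s : List A) : foll X (rayAppend l₁ s) ⊆ foll X (rayAppend l₂ s) := by
  induction s generalizing l₁ l₂ with
  | nil => exact h
  | cons a s ih => exact ih (foll_extendRay_mono hX h a)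

/-- The follower set of the word `u`, as a set of words. -/
def langFollow (X : Set (ℤ → A)) (u : List A) : Set (List A) := {v | u ++ v ∈ lang X}

lemma foll_eq_setOf_prefixWord (hX : IsSubshift X) (l : ℕ → A) :
    foll X l = {r | ∀ n, prefixWord r n ∈ ⋂ m, langFollow X (suffixWord l m)} := by
  ext r
  simp only [Set.mem_iInter, Set.mem_ofPred_eq, langFollow]
  constructor
  · intro hr n m
    rw [← cfgWord_glue]
    exact cfgWord_mem_lang hr _ _
  · intro h
    refine hX.mem_of_forall_cfgWord_mem fun n => ?_
    rw [two_mul, add_assoc, cfgWord_glue]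
    exact h (n + 1) n

lemma antitone_langFollow_suffixWord (l : ℕ → A) :
    Antitone fun m => langFollow X (suffixWord l m) :=
  antitone_nat_of_succ_le fun m _ hv =>
    mem_lang_of_append_mem_right (u := [l m]) (by simpa [langFollow, suffixWord_succ] using hv)

def KPath (X : Set (ℤ → A)) : List A → Set (ℕ → A) → Set (ℕ → A) → Prop
  | [], q, q' => q = q'
  | a :: s, q, q' => ∃ q'', KEdge X q a q'' ∧ KPath X s q'' q'

section KPath

variable {q q' q'' : Set (ℕ → A)} {t : List A}

lemma KPath.append (h : KPath X s q q') (h' : KPath X t q' q'') : KPath X (s ++ t) q q'' := by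
  induction s generalizing q with
  | nil => exact (h : q = q') ▸ h'
  | cons a s ih =>
    obtain ⟨p, hp, hs⟩ := h
    exact ⟨p, hp, ih hs⟩

lemma KPath.exists_of_append (h : KPath X (s ++ t) q q'') :
    ∃ q', KPath X s q q' ∧ KPath X t q' q'' := by
  induction s generalizing q with
  | nil => exact ⟨q, rfl, h⟩
  | cons a s ih =>
    obtain ⟨p, hp, hs⟩ := h
    obtain ⟨q', h₁, h₂⟩ := ih hs
    exact ⟨q', ⟨p, hp, h₁⟩, h₂⟩

lemma KPath.kReach (h : KPath X s q q') : KReach X q q' := by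
  induction s generalizing q with
  | nil => exact (h : q = q') ▸ .refl
  | cons a s ih =>
    obtain ⟨p, hp, hs⟩ := h
    exact .head ⟨a, hp⟩ (ih hs)

lemma KPath.rayAppend (hX : IsSubshift X) (h : KPath X s q q') (hl : l ∈ LeftRays X)
    (hq : foll X l = q) : Paper.rayAppend l s ∈ LeftRays X ∧ foll X (Paper.rayAppend l s) = q' := by
  induction s generalizing l q with
  | nil => exact ⟨hl, hq.trans h⟩
  | cons a s ih =>
    obtain ⟨p, hp, hs⟩ := h
    obtain ⟨hla, hpa⟩ := hp.extendRay hX hq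
    exact ih hs hla hpa

lemma kPath_rayAppend (hX : IsSubshift X) (hs : rayAppend l s ∈ LeftRays X) :
    KPath X s (foll X l) (foll X (rayAppend l s)) := by
  induction s generalizing l with
  | nil => rfl
  | cons a s ih =>
    have hla := mem_leftRays_of_rayAppend_mem (s := s) hX hs
    exact ⟨_, ⟨l, mem_leftRays_of_rayAppend_mem (s := [a]) hX hla, hla, rfl, rfl⟩, ih hs⟩

lemma KPath.mem_lang (hX : IsSubshift X) (h : KPath X s q q') (hq : KVertex X q) :
    s ∈ lang X := by
  obtain ⟨l, hl, rfl⟩ := hq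
  simpa only [suffixWord_rayAppend] using
    suffixWord_mem_lang (h.rayAppend hX hl rfl).1 s.length

lemma FVertex.of_kPath (hX : IsSubshift X) {w : List A} (hq : FVertex X w q)
    (hq'' : FVertex X w q'') (h : KPath X s q q') (h' : KPath X t q' q'') : FVertex X w q' := by
  obtain ⟨l, hl, rfl⟩ := hq.1
  obtain ⟨hls, rfl⟩ := h.rayAppend hX hl rfl
  exact ⟨⟨_, hls, rfl⟩, hq.2.1.trans h.kReach, h'.kReach.trans hq''.2.2⟩

end KPath

lemma exists_le_raySuffix_dropRay (htrans : TransitiveShift X) {w : List A} (hw : w ∈ lang X)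
    (hl : l ∈ LeftRays X) (hlang : langL l = lang X) (N : ℕ) :
    ∃ j, N ≤ j ∧ raySuffix (dropRay l j) w := by
  obtain ⟨t, ht⟩ := htrans w hw _ (suffixWord_mem_lang hl N)
  obtain ⟨i, hi⟩ := occursInLeft_iff.1 (hlang ▸ ht : w ++ t ++ suffixWord l N ∈ langL l)
  refine ⟨t.length + N + i, by omega, raySuffix_iff.2 ?_⟩
  have hlen : (w ++ t ++ suffixWord l N).length = w.length + (t.length + N) := by
    simp only [List.length_append, suffixWord_length, add_assoc]
  rw [raySuffix_iff, hlen, suffixWord_add, dropRay_dropRay, List.append_assoc] at hi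
  exact (List.append_inj hi (suffixWord_length _ _)).1

/-- As `dropRay l j` ends with `w`, its follower set lies in `follW X w = foll X l`: reading the
last `j` symbols of `l` once more from `foll X l` closes a cycle of the Krieger graph. -/
lemma foll_rayAppend_suffixWord (hX : IsSubshift X) {w : List A} (hsuf : raySuffix l w)
    (hfoll : foll X l = follW X w) {j : ℕ} (hj : w.length ≤ j)
    (hjw : raySuffix (dropRay l j) w) : foll X (rayAppend l (suffixWord l j)) = foll X l := by
  apply subset_antisymm
  · rw [hfoll]
    refine foll_subset_follW hX (raySuffix_iff.2 ?_)
    have hlast := suffixWord_rayAppend l (suffixWord l j)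
    rw [suffixWord_length] at hlast
    exact (suffixWord_eq_of_le hlast hj).trans (raySuffix_iff.1 hsuf)
  · calc foll X l = foll X (rayAppend (dropRay l j) (suffixWord l j)) := by
          rw [rayAppend_dropRay_suffixWord]
      _ ⊆ foll X (rayAppend l (suffixWord l j)) :=
          foll_rayAppend_mono hX (hfoll ▸ foll_subset_follW hX hjw) _

/-- Density of the Fischer graph: `u` occurs in `l` to the right of an occurrence of `w`, hence
in the label of a cycle through `follW X w`. -/
lemma exists_kPath_fVertex (hX : IsSubshift X) (htrans : TransitiveShift X) {w : List A}
    (hw : HalfSyncWord X w) (hu : u ∈ lang X) :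
    ∃ q q', FVertex X w q ∧ FVertex X w q' ∧ KPath X u q q' := by
  obtain ⟨hwlang, l, hl, hsuf, hlang, hfoll⟩ := hw
  obtain ⟨i, hi⟩ := occursInLeft_iff.1 (hlang ▸ hu : u ∈ langL l)
  obtain ⟨j, hj, hjw⟩ := exists_le_raySuffix_dropRay htrans hwlang hl hlang
    (w.length + (u.length + i))
  obtain ⟨k, rfl⟩ : ∃ k, j = k + (u.length + i) := ⟨j - (u.length + i), by omega⟩
  have hcycle := foll_rayAppend_suffixWord hX hsuf hfoll (by omega) hjw
  have hpath := kPath_rayAppend hX (mem_leftRays_iff.2 (hcycle ▸ mem_leftRays_iff.1 hl))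
  rw [hcycle, suffixWord_add, suffixWord_add, raySuffix_iff.1 hi, ← List.append_assoc] at hpath
  have hF : FVertex X w (foll X l) := ⟨⟨l, hl, rfl⟩, hfoll ▸ .refl, hfoll ▸ .refl⟩
  obtain ⟨q', hpu, hp₂⟩ := hpath.exists_of_append
  obtain ⟨q, hp₁, hu⟩ := hpu.exists_of_append
  exact ⟨q, q', hF.of_kPath hX hF hp₁ (hu.append hp₂), hF.of_kPath hX hF hpu hp₂, hu⟩

def fischerWordsFrom (X : Set (ℤ → A)) (w : List A) (S : Set (Set (ℕ → A))) : Set (List A) :=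
  {v | ∃ q ∈ S, ∃ q', FVertex X w q' ∧ KPath X v q q'}

def fischerTargets (X : Set (ℤ → A)) (w : List A) (u : List A) : Set (Set (ℕ → A)) :=
  {q' | ∃ q, FVertex X w q ∧ FVertex X w q' ∧ KPath X u q q'}

lemma langFollow_eq_fischerWordsFrom (hX : IsSubshift X) (htrans : TransitiveShift X)
    {w : List A} (hw : HalfSyncWord X w) (u : List A) :
    langFollow X u = fischerWordsFrom X w (fischerTargets X w u) := by
  ext v
  constructor
  · intro huv
    obtain ⟨q, q'', hq, hq'', h⟩ := exists_kPath_fVertex hX htrans hw huv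
    obtain ⟨q', h₁, h₂⟩ := h.exists_of_append
    exact ⟨q', ⟨q, hq, hq.of_kPath hX hq'' h₁ h₂, h₁⟩, q'', hq'', h₂⟩
  · rintro ⟨q', ⟨q, hq, -, h₁⟩, q'', -, h₂⟩
    exact (h₁.append h₂).mem_lang hX hq.1

lemma finite_range_langFollow (hX : IsSubshift X) (htrans : TransitiveShift X) {w : List A}
    (hw : HalfSyncWord X w) (hfin : {v : Set (ℕ → A) | FVertex X w v}.Finite) :
    (Set.range (langFollow X)).Finite := by
  refine (hfin.finite_subsets.image (fischerWordsFrom X w)).subset ?_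
  rintro _ ⟨u, rfl⟩
  refine ⟨fischerTargets X w u, ?_, (langFollow_eq_fischerWordsFrom hX htrans hw u).symm⟩
  rintro q ⟨-, -, hq, -⟩
  exact hq

end

theorem stmt6_general (X : Set (ℤ → A)) (hX : IsSubshift X)
    (hhs : HalfSynchronized X) (w : List A) (hw : HalfSyncWord X w)
    (hfin : {v : Set (ℕ → A) | FVertex X w v}.Finite) : Sofic X := by
  have hrange := finite_range_langFollow hX hhs.1 hw hfin
  refine (hrange.image fun E => {r : ℕ → A | ∀ n, prefixWord r n ∈ E}).subset ?_
  rintro _ ⟨l, -, rfl⟩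
  obtain ⟨M, hM⟩ := Antitone.exists_iInter_eq_of_finite_range (antitone_langFollow_suffixWord l)
    (hrange.subset (Set.range_comp_subset_range (suffixWord l) (langFollow X)))
  exact ⟨_, ⟨suffixWord l M, rfl⟩, by rw [foll_eq_setOf_prefixWord hX, hM]⟩

theorem stmt6 [Finite A] (X : Set (ℤ → A)) (hX : IsSubshift X)
    (hhs : HalfSynchronized X) (w : List A) (hw : HalfSyncWord X w)
    (hfin : {v : Set (ℕ → A) | FVertex X w v}.Finite) : Sofic X :=
  stmt6_general X hX hhs w hw hfin

end Paper
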